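/- arXiv:2102.11927 — 2 statements merged into one kernel-verified Lean document; each statement's English description precedes it below -/
import Mathlib

section
/- For the logistic map f(x) = μx(1−x) with μ > 4, the set Λ of points whose full forward orbit remains in [0,1] has empty interior when μ > 2 + √5 (in fact for the statement take μ ≥ 2 + √5): for every nonempty open subinterval of [0,1] there exists a point whose orbit eventually leaves [0,1]. -/
/-!
Every point `x` of the invariant set satisfies `f x ≤ 1`, and for `μ ≥ 2 + √5` this forces
`|f' x| = μ |1 - 2x| ≥ 1`. An interval `[u, v]` inside the invariant set cannot contain `1/2`
(where `f = μ/4 > 1`), so `f` is monotone on it and, writing `ℓ = v - u`, maps it onto an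
interval of length `μ ℓ |1 - u - v| ≥ ℓ + μ ℓ²`. The image again lies in the invariant set, so
iterating the interval grows its length by at least a fixed amount at every step, which is
impossible inside `[0, 1]`.
-/

open Set Metric
open scoped Interval

section Expanding

variable {g : ℝ → ℝ} {K : Set ℝ} {L c : ℝ}

theorem exists_uIcc_subset_of_expanding (hg : Continuous g) (hK : MapsTo g K K) (hc : 0 ≤ c)
    (hexp : ∀ u v, L ≤ dist u v → [[u, v]] ⊆ K → dist u v + c ≤ dist (g u) (g v))
    {u v : ℝ} (hL : L ≤ dist u v) (huv : [[u, v]] ⊆ K) (n : ℕ) :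
    ∃ u' v', L + n * c ≤ dist u' v' ∧ [[u', v']] ⊆ K := by
  induction n with
  | zero => exact ⟨u, v, by simpa using hL, huv⟩
  | succ n ih =>
    obtain ⟨u', v', hlen, hsub⟩ := ih
    have hL' : L ≤ dist u' v' := by nlinarith [n.cast_nonneg (α := ℝ)]
    refine ⟨g u', g v', ?_, ?_⟩
    · push_cast
      linarith [hexp u' v' hL' hsub]
    · exact (intermediate_value_uIcc hg.continuousOn).trans
        ((image_mono hsub).trans hK.image_subset)

theorem not_uIcc_subset_of_expanding (hg : Continuous g) (hK : MapsTo g K K)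
    (hKb : Bornology.IsBounded K) (hc : 0 < c)
    (hexp : ∀ u v, L ≤ dist u v → [[u, v]] ⊆ K → dist u v + c ≤ dist (g u) (g v))
    {u v : ℝ} (hL : L ≤ dist u v) : ¬ [[u, v]] ⊆ K := by
  intro huv
  obtain ⟨n, hn⟩ := exists_nat_gt ((diam K - L) / c)
  obtain ⟨u', v', hlen, hsub⟩ :=
    exists_uIcc_subset_of_expanding hg hK hc.le hexp hL huv n
  have hdiam : dist u' v' ≤ diam K :=
    dist_le_diam_of_mem hKb (hsub left_mem_uIcc) (hsub right_mem_uIcc)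
  rw [div_lt_iff₀ hc] at hn
  linarith

end Expanding

def logistic (μ x : ℝ) : ℝ := μ * x * (1 - x)

def logisticInvariantSet (μ : ℝ) : Set ℝ := {x | ∀ n : ℕ, (logistic μ)^[n] x ∈ Icc 0 1}

section Logistic

variable {μ : ℝ}

theorem continuous_logistic : Continuous (logistic μ) := by
  unfold logistic; fun_prop

theorem mapsTo_logisticInvariantSet :
    MapsTo (logistic μ) (logisticInvariantSet μ) (logisticInvariantSet μ) := fun x hx n => by
  simpa only [← Function.iterate_succ_apply] using hx (n + 1)

theorem logisticInvariantSet_subset_Icc : logisticInvariantSet μ ⊆ Icc 0 1 := fun _ hx => hx 0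

theorem logistic_le_one_of_mem_logisticInvariantSet {x : ℝ} (hx : x ∈ logisticInvariantSet μ) :
    logistic μ x ≤ 1 :=
  (hx 1).2

theorem one_le_abs_mul_one_sub_two_mul_of_logistic_le_one (hμ : 2 + √5 ≤ μ) {x : ℝ}
    (hx : logistic μ x ≤ 1) : 1 ≤ |μ * (1 - 2 * x)| := by
  have h5 : √5 ^ 2 = 5 := Real.sq_sqrt (by norm_num)
  have hμ4 : 4 < μ := by nlinarith [Real.sqrt_nonneg 5]
  -- `(μ (1 - 2x))² = μ² - 4μ f(x) ≥ μ² - 4μ ≥ 1`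
  have hsq : (μ * (1 - 2 * x)) ^ 2 = μ ^ 2 - 4 * μ * logistic μ x := by unfold logistic; ring
  rw [← one_le_sq_iff_one_le_abs, hsq]
  nlinarith [Real.sqrt_nonneg 5]

theorem dist_add_mul_sq_le_dist_logistic (hμ : 2 + √5 ≤ μ) {u v : ℝ}
    (huv : ∀ z ∈ [[u, v]], logistic μ z ≤ 1) :
    dist u v + μ * dist u v ^ 2 ≤ dist (logistic μ u) (logistic μ v) := by
  wlog hle : u ≤ v generalizing u v
  · rw [dist_comm, dist_comm (logistic μ u)]
    exact this (by rwa [uIcc_comm]) (le_of_not_ge hle)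
  rw [uIcc_of_le hle] at huv
  have hμ4 : 4 < μ := by
    nlinarith [Real.sqrt_nonneg 5, Real.sq_sqrt (show (0 : ℝ) ≤ 5 by norm_num)]
  have hhalf : 1 / 2 < u ∨ v < 1 / 2 := by
    by_contra! h
    have := huv (1 / 2) h
    unfold logistic at this
    linarith
  have hdiff : logistic μ v - logistic μ u = μ * (v - u) * (1 - u - v) := by
    unfold logistic; ring
  rw [Real.dist_eq, Real.dist_eq, abs_sub_comm u, abs_of_nonneg (sub_nonneg.2 hle),
    abs_sub_comm (logistic μ u), hdiff]
  have hvu : 0 ≤ μ * (v - u) := by nlinarith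
  rcases hhalf with hu | hv
  · have hslope := one_le_abs_mul_one_sub_two_mul_of_logistic_le_one hμ (huv u ⟨le_rfl, hle⟩)
    rw [abs_of_nonpos (mul_nonpos_of_nonneg_of_nonpos (by linarith) (by linarith))] at hslope
    rw [abs_of_nonpos (by nlinarith [mul_nonneg hvu (by linarith : (0 : ℝ) ≤ u + v - 1)])]
    nlinarith [mul_le_mul_of_nonneg_left hslope (sub_nonneg.2 hle)]
  · have hslope := one_le_abs_mul_one_sub_two_mul_of_logistic_le_one hμ (huv v ⟨hle, le_rfl⟩)
    rw [abs_of_nonneg (mul_nonneg (by linarith) (by linarith))] at hslope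
    rw [abs_of_nonneg (mul_nonneg hvu (by linarith))]
    nlinarith [mul_le_mul_of_nonneg_left hslope (sub_nonneg.2 hle)]

end Logistic

theorem logistic_invariant_set_empty_interior (μ : ℝ) (hμ : 2 + Real.sqrt 5 ≤ μ) :
    ∀ a b : ℝ, a < b → Set.Ioo a b ⊆ Set.Icc (0 : ℝ) 1 →
      ∃ x ∈ Set.Ioo a b, ∃ n : ℕ,
        (fun y => μ * y * (1 - y))^[n] x ∉ Set.Icc (0 : ℝ) 1 := by
  intro a b hab _
  by_contra! hcon
  have hsub : Ioo a b ⊆ logisticInvariantSet μ := hcon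
  set u := (3 * a + b) / 4 with hu
  set v := (a + 3 * b) / 4 with hv
  have hμ0 : 0 < μ := by nlinarith [Real.sqrt_nonneg 5]
  have hlen : 0 < dist u v := dist_pos.2 (by linarith [hu, hv])
  have huv : [[u, v]] ⊆ Ioo a b := by
    rw [uIcc_of_le (by linarith [hu, hv])]
    exact Icc_subset_Ioo (by linarith [hu, hv]) (by linarith [hu, hv])
  refine not_uIcc_subset_of_expanding continuous_logistic mapsTo_logisticInvariantSet
    (isBounded_Icc 0 1 |>.subset logisticInvariantSet_subset_Icc)
    (c := μ * dist u v ^ 2) (by positivity) ?_ le_rfl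
    (huv.trans hsub)
  intro u' v' hL hsub'
  have := dist_add_mul_sq_le_dist_logistic hμ
    fun z hz => logistic_le_one_of_mem_logisticInvariantSet (hsub' hz)
  have : μ * dist u v ^ 2 ≤ μ * dist u' v' ^ 2 := by gcongr
  linarith
end

section
/- One-step lower bound: if u₀ < U₁(q), then there exists a disturbance ξ with |ξ| ≤ ξ₀ such that for every control u with |u| ≤ u₀, the point f(q) + ξ + u lies in Q (escape fails). That is, U₁(q) is indeed the minimal control bound allowing guaranteed one-step escape. -/
open Set Metric

/-- One-step escape function: minimal control bound to leave `Q` in one iteration. -/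
noncomputable def escU1 (f : ℝ → ℝ) (Q : Set ℝ) (ξ0 : ℝ) (q : ℝ) : ℝ :=
  sSup ((fun ξ => Metric.infDist (f q + ξ) Qᶜ) '' Set.Icc (-ξ0) ξ0)

/-- The escape-function operator `T`. -/
noncomputable def escT (f : ℝ → ℝ) (Q : Set ℝ) (ξ0 : ℝ) (V : ℝ → ℝ) (q : ℝ) : ℝ :=
  sSup ((fun ξ => sInf ((fun r => max |f q + ξ - r| (V r)) '' Q)) '' Set.Icc (-ξ0) ξ0)

/-- Case A escape functions: `escUA f Q ξ0 k = U_{k+1}` (escape in `k+1` or fewer iterations). -/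
noncomputable def escUA (f : ℝ → ℝ) (Q : Set ℝ) (ξ0 : ℝ) : ℕ → ℝ → ℝ
  | 0 => escU1 f Q ξ0
  | k + 1 => fun q => min (escU1 f Q ξ0 q) (escT f Q ξ0 (escUA f Q ξ0 k) q)

/-- Case B escape functions: `escUB f Q ξ0 k = U_{k+1}` (escape in exactly `k+1` iterations). -/
noncomputable def escUB (f : ℝ → ℝ) (Q : Set ℝ) (ξ0 : ℝ) : ℕ → ℝ → ℝ
  | 0 => escU1 f Q ξ0
  | k + 1 => escT f Q ξ0 (escUB f Q ξ0 k)

theorem add_mem_of_norm_lt_infDist_compl {E : Type*} [SeminormedAddCommGroup E] {s : Set E}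
    {y u : E} (hu : ‖u‖ < infDist y sᶜ) : y + u ∈ s :=
  ball_infDist_compl_subset (x := y) (by rwa [mem_ball, dist_self_add_left])

theorem exists_lt_infDist_of_lt_escU1 {f : ℝ → ℝ} {Q : Set ℝ} {ξ0 u0 q : ℝ} (hξ : 0 ≤ ξ0)
    (h : u0 < escU1 f Q ξ0 q) : ∃ ξ, |ξ| ≤ ξ0 ∧ u0 < infDist (f q + ξ) Qᶜ := by
  obtain ⟨_, ⟨ξ, hξmem, rfl⟩, hlt⟩ :=
    exists_lt_of_lt_csSup ((nonempty_Icc.mpr (by linarith)).image _) h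
  exact ⟨ξ, abs_le.mpr hξmem, hlt⟩

theorem escU1_one_step_lower_bound_general (f : ℝ → ℝ) (ξ0 u0 : ℝ)
    (hξ : 0 < ξ0) (Q : Set ℝ)
    (q : ℝ) (h : u0 < escU1 f Q ξ0 q) :
    ∃ ξ : ℝ, |ξ| ≤ ξ0 ∧ ∀ u : ℝ, |u| ≤ u0 → f q + ξ + u ∈ Q := by
  obtain ⟨ξ, hξle, hlt⟩ := exists_lt_infDist_of_lt_escU1 hξ.le h
  exact ⟨ξ, hξle, fun u hu => add_mem_of_norm_lt_infDist_compl (hu.trans_lt hlt)⟩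

theorem escU1_one_step_lower_bound (f : ℝ → ℝ) (a b ξ0 u0 : ℝ) (hab : a ≤ b)
    (hξ : 0 < ξ0) (hu : 0 ≤ u0) (Q : Set ℝ) (hQ : Q = Set.Icc a b)
    (q : ℝ) (h : u0 < escU1 f Q ξ0 q) :
    ∃ ξ : ℝ, |ξ| ≤ ξ0 ∧ ∀ u : ℝ, |u| ≤ u0 → f q + ξ + u ∈ Q :=
  escU1_one_step_lower_bound_general f ξ0 u0 hξ Q q h
end
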